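/- Let t ≥ 2 be an even integer, ε a real number, and L ≥ 1 an integer. Consider spins taking values in {1,…,2t} with bond weight B(a,a′) = 1 if a = a′; B(a,a′) = e^{−εt} if a ≠ a′ and a, a′ both lie in {1,…,t} or both in {t+1,…,2t}; and B(a,a′) = e^{−εt + 2ε·((a−a′) mod 2)} if a and a′ lie in different blocks (so cross-block weight e^{−εt} for equal parity of a−a′ and e^{−ε(t−2)} for odd a−a′). Then the periodic-boundary partition function satisfies ∑_{s : ZMod L → {1,…,2t}} ∏_{i ∈ ZMod L} B(s_i, s_{i+1}) = (2t−4)·(1−e^{−εt})^L + 2·(1 − (t/2)·e^{−ε(t−2)} + (t/2 − 1)·e^{−εt})^L + (1 + (t/2)·e^{−ε(t−2)} − (t/2 + 1)·e^{−εt})^L + (1 + (t/2)·e^{−ε(t−2)} + (3t/2 − 1)·e^{−εt})^L. -/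

import Mathlib

open BigOperators

/-- Bond Boltzmann weight of the generalized `2t`-state Potts model emerging from
the Floquet-TRS random phase model at even time `t`: the first `t` states and the last
`t` states form two blocks; equal states have weight `1`, distinct states within a
block have weight `e^{−εt}` (type-I domain wall), and states in different blocks have
the parity-dependent weight `e^{−εt + 2ε((a−a') mod 2)}` (type-II domain wall). -/
noncomputable def gPottsWeightEven (t : ℕ) (ε : ℝ) (a a' : Fin (2 * t)) : ℝ :=
  if a = a' then 1
  else if ((a : ℕ) < t ↔ (a' : ℕ) < t) then Real.exp (-ε * t)
  else Real.exp (-ε * t + 2 * ε * ((((a : ℕ) : ℤ) - ((a' : ℕ) : ℤ)) % 2 : ℤ))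


section Chain

variable {α : Type*} [Fintype α] [DecidableEq α]

noncomputable def chainProd (M : Matrix α α ℝ) {k : ℕ} (q : Fin (k + 1) → α) : ℝ :=
  ∏ i : Fin k, M (q i.castSucc) (q i.succ)

omit [Fintype α] [DecidableEq α] in
lemma prod_cyc (M : Matrix α α ℝ) {l : ℕ} (s : Fin (l + 1) → α) :
    (∏ i : Fin (l + 1), M (s i) (s (i + 1))) = chainProd M (Fin.snoc s (s 0)) := by
  unfold chainProd
  refine Finset.prod_congr rfl fun i _ => ?_
  rw [Fin.snoc_castSucc]
  congr 1
  by_cases h : (i : ℕ) = l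
  · have h1 : i.succ = Fin.last (l + 1) := by
      ext; simp [h]
    have h2 : i + 1 = 0 := by
      ext
      rw [Fin.add_def, Fin.val_one']
      show (↑i + 1 % (l + 1)) % (l + 1) = 0
      rcases Nat.eq_zero_or_pos l with rfl | hl
      · omega
      · have e : 1 % (l + 1) = 1 := Nat.mod_eq_of_lt (by omega)
        rw [e, h]
        exact Nat.mod_self (l + 1)
    rw [h1, h2, Fin.snoc_last]
  · have hlt : (i : ℕ) < l := lt_of_le_of_ne (Nat.lt_succ_iff.mp i.isLt) h
    have e1 : ((i + 1 : Fin (l + 1))).val = (i : ℕ) + 1 := by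
      rw [Fin.add_def, Fin.val_one']
      have e : 1 % (l + 1) = 1 := Nat.mod_eq_of_lt (by omega)
      rw [e]
      exact Nat.mod_eq_of_lt (by omega)
    have h1 : i.succ = Fin.castSucc (i + 1) := by
      ext; rw [Fin.val_succ, Fin.coe_castSucc, e1]
    rw [h1, Fin.snoc_castSucc]

example (l : ℕ) (M : Matrix α α ℝ) :
    (∑ s : ZMod (l+1) → α, ∏ i : ZMod (l+1), M (s i) (s (i + 1)))
    = ∑ s : Fin (l+1) → α, ∏ i : Fin (l+1), M (s i) (s (i + 1)) := rfl

omit [Fintype α] [DecidableEq α] in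
lemma chainProd_cons (M : Matrix α α ℝ) {k : ℕ} (a : α) (q : Fin (k + 1) → α) :
    chainProd M (Fin.cons a q) = M a (q 0) * chainProd M q := by
  unfold chainProd
  simp only [Fin.prod_univ_succ, Fin.castSucc_zero, Fin.cons_zero, Fin.cons_succ,
    ← Fin.succ_castSucc]

lemma sum_chain (M : Matrix α α ℝ) : ∀ (k : ℕ) (a b : α),
    (∑ s : Fin k → α, chainProd M (Fin.cons a (Fin.snoc s b))) = (M ^ (k + 1)) a b := by
  intro k
  induction k with
  | zero =>
    intro a b
    rw [pow_one, Fintype.sum_unique]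
    simp [chainProd, Fin.snoc]
  | succ k ih =>
    intro a b
    rw [pow_succ', Matrix.mul_apply]
    rw [← (Fin.consEquiv (fun _ : Fin (k+1) => α)).sum_comp]
    rw [Fintype.sum_prod_type]
    refine Finset.sum_congr rfl fun c _ => ?_
    rw [← ih c b, Finset.mul_sum]
    refine Finset.sum_congr rfl fun s _ => ?_
    have h1 : (Fin.consEquiv (fun _ : Fin (k+1) => α)) (c, s) = Fin.cons c s := rfl
    rw [h1, ← Fin.cons_snoc_eq_snoc_cons, chainProd_cons]
    simp

lemma cyc (M : Matrix α α ℝ) (L : ℕ) [NeZero L] :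
    (∑ s : ZMod L → α, ∏ i : ZMod L, M (s i) (s (i + 1))) = (M ^ L).trace := by
  obtain ⟨l, rfl⟩ : ∃ l, L = l + 1 := ⟨L - 1, (Nat.succ_pred_eq_of_pos (NeZero.pos L)).symm⟩
  show (∑ s : Fin (l + 1) → α, ∏ i : Fin (l + 1), M (s i) (s (i + 1))) = _
  rw [Matrix.trace]
  calc (∑ s : Fin (l + 1) → α, ∏ i : Fin (l + 1), M (s i) (s (i + 1)))
      = ∑ s : Fin (l + 1) → α, chainProd M (Fin.snoc s (s 0)) :=
        Finset.sum_congr rfl fun s _ => prod_cyc M s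
    _ = ∑ p : α × (Fin l → α), chainProd M
          (Fin.snoc ((Fin.consEquiv (fun _ : Fin (l + 1) => α)) p)
            (((Fin.consEquiv (fun _ : Fin (l + 1) => α)) p) 0)) :=
        ((Fin.consEquiv (fun _ : Fin (l + 1) => α)).sum_comp _).symm
    _ = ∑ a : α, ∑ g : Fin l → α, chainProd M (Fin.cons a (Fin.snoc g a)) := by
        rw [Fintype.sum_prod_type]
        refine Finset.sum_congr rfl fun a _ => Finset.sum_congr rfl fun g _ => ?_
        have h1 : (Fin.consEquiv (fun _ : Fin (l + 1) => α)) (a, g)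
            = (Fin.cons a g : Fin (l + 1) → α) := rfl
        rw [h1]
        have h0 : (Fin.cons a g : Fin (l + 1) → α) 0 = a := rfl
        rw [h0, ← Fin.cons_snoc_eq_snoc_cons]
    _ = ∑ a : α, (M ^ (l + 1)) a a := by
        refine Finset.sum_congr rfl fun a _ => ?_
        exact sum_chain M l a a
    _ = ∑ a : α, Matrix.diag (M ^ (l + 1)) a := rfl

end Chain

namespace GP

variable (t : ℕ)

def Jm : Matrix (Fin (2 * t)) (Fin (2 * t)) ℝ := Matrix.of fun _ _ => 1

def Em : Matrix (Fin (2 * t)) (Fin (2 * t)) ℝ := Matrix.of fun a b =>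
  if (decide ((a : ℕ) < t) = decide ((b : ℕ) < t))
      ∧ (decide ((a : ℕ) % 2 = 0) = decide ((b : ℕ) % 2 = 0)) then 1 else 0

def Cm : Matrix (Fin (2 * t)) (Fin (2 * t)) ℝ := Matrix.of fun a b =>
  if (decide ((a : ℕ) < t) ≠ decide ((b : ℕ) < t))
      ∧ (decide ((a : ℕ) % 2 = 0) ≠ decide ((b : ℕ) % 2 = 0)) then 1 else 0

lemma parity_sum (g : Bool → ℝ) : ∀ m : ℕ,
    (∑ x ∈ Finset.range (m + m), g (decide (x % 2 = 0))) = m * (g true + g false) := by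
  intro m
  induction m with
  | zero => simp
  | succ m ih =>
    have h : m + 1 + (m + 1) = (m + m) + 1 + 1 := by ring
    rw [h, Finset.sum_range_succ, Finset.sum_range_succ, ih]
    have h1 : decide ((m + m) % 2 = 0) = true := decide_eq_true (by omega)
    have h2 : decide ((m + m + 1) % 2 = 0) = false := decide_eq_false (by omega)
    rw [h1, h2]
    push_cast
    ring

lemma sum_cls {m : ℕ} (he : t = m + m) (f : Bool → Bool → ℝ) :
    (∑ c : Fin (2 * t), f (decide ((c : ℕ) < t)) (decide ((c : ℕ) % 2 = 0)))
    = m * (f true true + f true false + f false true + f false false) := by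
  rw [Fin.sum_univ_eq_sum_range (fun x => f (decide (x < t)) (decide (x % 2 = 0))) (2 * t)]
  have hsplit : 2 * t = t + t := by ring
  rw [hsplit, Finset.sum_range_add]
  have h1 : (∑ x ∈ Finset.range t, f (decide (x < t)) (decide (x % 2 = 0)))
      = m * (f true true + f true false) := by
    rw [show (Finset.range t).sum (fun x => f (decide (x < t)) (decide (x % 2 = 0)))
        = (Finset.range t).sum (fun x => (fun b => f true b) (decide (x % 2 = 0))) from
      Finset.sum_congr rfl fun x hx => by
        rw [decide_eq_true (Finset.mem_range.mp hx)]]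
    rw [he, parity_sum]
  have h2 : (∑ x ∈ Finset.range t, f (decide (t + x < t)) (decide ((t + x) % 2 = 0)))
      = m * (f false true + f false false) := by
    rw [show (Finset.range t).sum (fun x => f (decide (t + x < t)) (decide ((t + x) % 2 = 0)))
        = (Finset.range t).sum (fun x => (fun b => f false b) (decide (x % 2 = 0))) from
      Finset.sum_congr rfl fun x hx => by
        have e1 : decide (t + x < t) = false := by simp
        have e2 : ((t + x) % 2) = x % 2 := by omega
        rw [e1, e2]]
    rw [he, parity_sum]
  rw [h1, h2]
  ring

lemma mul_JJ (he : t = m + m) : Jm t * Jm t = ((4:ℝ) * m) • Jm t := by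
  ext a b
  rw [Matrix.mul_apply]
  rw [show (∑ c : Fin (2 * t), Jm t a c * Jm t c b)
      = ∑ c : Fin (2 * t), (fun b1 b2 => (1:ℝ) * (1:ℝ)) (decide ((c : ℕ) < t)) (decide ((c : ℕ) % 2 = 0)) from rfl,
    sum_cls t he (fun b1 b2 => (1:ℝ) * (1:ℝ))]
  by_cases p1 : (a : ℕ) < t <;> by_cases p2 : (a : ℕ) % 2 = 0 <;>
    by_cases p3 : (b : ℕ) < t <;> by_cases p4 : (b : ℕ) % 2 = 0 <;>
    simp [Jm, Em, Cm, p1, p2, p3, p4] <;> push_cast <;> ring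


lemma mul_JC (he : t = m + m) : Jm t * Cm t = (m:ℝ) • Jm t := by
  ext a b
  rw [Matrix.mul_apply]
  rw [show (∑ c : Fin (2 * t), Jm t a c * Cm t c b)
      = ∑ c : Fin (2 * t), (fun b1 b2 => (1:ℝ) * (if (b1 ≠ decide ((b : ℕ) < t)) ∧ (b2 ≠ decide ((b : ℕ) % 2 = 0)) then (1:ℝ) else 0)) (decide ((c : ℕ) < t)) (decide ((c : ℕ) % 2 = 0)) from rfl,
    sum_cls t he (fun b1 b2 => (1:ℝ) * (if (b1 ≠ decide ((b : ℕ) < t)) ∧ (b2 ≠ decide ((b : ℕ) % 2 = 0)) then (1:ℝ) else 0))]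
  by_cases p1 : (a : ℕ) < t <;> by_cases p2 : (a : ℕ) % 2 = 0 <;>
    by_cases p3 : (b : ℕ) < t <;> by_cases p4 : (b : ℕ) % 2 = 0 <;>
    simp [Jm, Em, Cm, p1, p2, p3, p4] <;> push_cast <;> ring


lemma mul_CJ (he : t = m + m) : Cm t * Jm t = (m:ℝ) • Jm t := by
  ext a b
  rw [Matrix.mul_apply]
  rw [show (∑ c : Fin (2 * t), Cm t a c * Jm t c b)
      = ∑ c : Fin (2 * t), (fun b1 b2 => (if (decide ((a : ℕ) < t) ≠ b1) ∧ (decide ((a : ℕ) % 2 = 0) ≠ b2) then (1:ℝ) else 0) * (1:ℝ)) (decide ((c : ℕ) < t)) (decide ((c : ℕ) % 2 = 0)) from rfl,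
    sum_cls t he (fun b1 b2 => (if (decide ((a : ℕ) < t) ≠ b1) ∧ (decide ((a : ℕ) % 2 = 0) ≠ b2) then (1:ℝ) else 0) * (1:ℝ))]
  by_cases p1 : (a : ℕ) < t <;> by_cases p2 : (a : ℕ) % 2 = 0 <;>
    by_cases p3 : (b : ℕ) < t <;> by_cases p4 : (b : ℕ) % 2 = 0 <;>
    simp [Jm, Em, Cm, p1, p2, p3, p4] <;> push_cast <;> ring


lemma mul_JE (he : t = m + m) : Jm t * Em t = (m:ℝ) • Jm t := by
  ext a b
  rw [Matrix.mul_apply]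
  rw [show (∑ c : Fin (2 * t), Jm t a c * Em t c b)
      = ∑ c : Fin (2 * t), (fun b1 b2 => (1:ℝ) * (if (b1 = decide ((b : ℕ) < t)) ∧ (b2 = decide ((b : ℕ) % 2 = 0)) then (1:ℝ) else 0)) (decide ((c : ℕ) < t)) (decide ((c : ℕ) % 2 = 0)) from rfl,
    sum_cls t he (fun b1 b2 => (1:ℝ) * (if (b1 = decide ((b : ℕ) < t)) ∧ (b2 = decide ((b : ℕ) % 2 = 0)) then (1:ℝ) else 0))]
  by_cases p1 : (a : ℕ) < t <;> by_cases p2 : (a : ℕ) % 2 = 0 <;>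
    by_cases p3 : (b : ℕ) < t <;> by_cases p4 : (b : ℕ) % 2 = 0 <;>
    simp [Jm, Em, Cm, p1, p2, p3, p4] <;> push_cast <;> ring


lemma mul_EJ (he : t = m + m) : Em t * Jm t = (m:ℝ) • Jm t := by
  ext a b
  rw [Matrix.mul_apply]
  rw [show (∑ c : Fin (2 * t), Em t a c * Jm t c b)
      = ∑ c : Fin (2 * t), (fun b1 b2 => (if (decide ((a : ℕ) < t) = b1) ∧ (decide ((a : ℕ) % 2 = 0) = b2) then (1:ℝ) else 0) * (1:ℝ)) (decide ((c : ℕ) < t)) (decide ((c : ℕ) % 2 = 0)) from rfl,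
    sum_cls t he (fun b1 b2 => (if (decide ((a : ℕ) < t) = b1) ∧ (decide ((a : ℕ) % 2 = 0) = b2) then (1:ℝ) else 0) * (1:ℝ))]
  by_cases p1 : (a : ℕ) < t <;> by_cases p2 : (a : ℕ) % 2 = 0 <;>
    by_cases p3 : (b : ℕ) < t <;> by_cases p4 : (b : ℕ) % 2 = 0 <;>
    simp [Jm, Em, Cm, p1, p2, p3, p4] <;> push_cast <;> ring


lemma mul_CC (he : t = m + m) : Cm t * Cm t = (m:ℝ) • Em t := by
  ext a b
  rw [Matrix.mul_apply]
  rw [show (∑ c : Fin (2 * t), Cm t a c * Cm t c b)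
      = ∑ c : Fin (2 * t), (fun b1 b2 => (if (decide ((a : ℕ) < t) ≠ b1) ∧ (decide ((a : ℕ) % 2 = 0) ≠ b2) then (1:ℝ) else 0) * (if (b1 ≠ decide ((b : ℕ) < t)) ∧ (b2 ≠ decide ((b : ℕ) % 2 = 0)) then (1:ℝ) else 0)) (decide ((c : ℕ) < t)) (decide ((c : ℕ) % 2 = 0)) from rfl,
    sum_cls t he (fun b1 b2 => (if (decide ((a : ℕ) < t) ≠ b1) ∧ (decide ((a : ℕ) % 2 = 0) ≠ b2) then (1:ℝ) else 0) * (if (b1 ≠ decide ((b : ℕ) < t)) ∧ (b2 ≠ decide ((b : ℕ) % 2 = 0)) then (1:ℝ) else 0))]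
  by_cases p1 : (a : ℕ) < t <;> by_cases p2 : (a : ℕ) % 2 = 0 <;>
    by_cases p3 : (b : ℕ) < t <;> by_cases p4 : (b : ℕ) % 2 = 0 <;>
    simp [Jm, Em, Cm, p1, p2, p3, p4] <;> push_cast <;> ring


lemma mul_CE (he : t = m + m) : Cm t * Em t = (m:ℝ) • Cm t := by
  ext a b
  rw [Matrix.mul_apply]
  rw [show (∑ c : Fin (2 * t), Cm t a c * Em t c b)
      = ∑ c : Fin (2 * t), (fun b1 b2 => (if (decide ((a : ℕ) < t) ≠ b1) ∧ (decide ((a : ℕ) % 2 = 0) ≠ b2) then (1:ℝ) else 0) * (if (b1 = decide ((b : ℕ) < t)) ∧ (b2 = decide ((b : ℕ) % 2 = 0)) then (1:ℝ) else 0)) (decide ((c : ℕ) < t)) (decide ((c : ℕ) % 2 = 0)) from rfl,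
    sum_cls t he (fun b1 b2 => (if (decide ((a : ℕ) < t) ≠ b1) ∧ (decide ((a : ℕ) % 2 = 0) ≠ b2) then (1:ℝ) else 0) * (if (b1 = decide ((b : ℕ) < t)) ∧ (b2 = decide ((b : ℕ) % 2 = 0)) then (1:ℝ) else 0))]
  by_cases p1 : (a : ℕ) < t <;> by_cases p2 : (a : ℕ) % 2 = 0 <;>
    by_cases p3 : (b : ℕ) < t <;> by_cases p4 : (b : ℕ) % 2 = 0 <;>
    simp [Jm, Em, Cm, p1, p2, p3, p4] <;> push_cast <;> ring


lemma mul_EC (he : t = m + m) : Em t * Cm t = (m:ℝ) • Cm t := by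
  ext a b
  rw [Matrix.mul_apply]
  rw [show (∑ c : Fin (2 * t), Em t a c * Cm t c b)
      = ∑ c : Fin (2 * t), (fun b1 b2 => (if (decide ((a : ℕ) < t) = b1) ∧ (decide ((a : ℕ) % 2 = 0) = b2) then (1:ℝ) else 0) * (if (b1 ≠ decide ((b : ℕ) < t)) ∧ (b2 ≠ decide ((b : ℕ) % 2 = 0)) then (1:ℝ) else 0)) (decide ((c : ℕ) < t)) (decide ((c : ℕ) % 2 = 0)) from rfl,
    sum_cls t he (fun b1 b2 => (if (decide ((a : ℕ) < t) = b1) ∧ (decide ((a : ℕ) % 2 = 0) = b2) then (1:ℝ) else 0) * (if (b1 ≠ decide ((b : ℕ) < t)) ∧ (b2 ≠ decide ((b : ℕ) % 2 = 0)) then (1:ℝ) else 0))]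
  by_cases p1 : (a : ℕ) < t <;> by_cases p2 : (a : ℕ) % 2 = 0 <;>
    by_cases p3 : (b : ℕ) < t <;> by_cases p4 : (b : ℕ) % 2 = 0 <;>
    simp [Jm, Em, Cm, p1, p2, p3, p4] <;> push_cast <;> ring


lemma mul_EE (he : t = m + m) : Em t * Em t = (m:ℝ) • Em t := by
  ext a b
  rw [Matrix.mul_apply]
  rw [show (∑ c : Fin (2 * t), Em t a c * Em t c b)
      = ∑ c : Fin (2 * t), (fun b1 b2 => (if (decide ((a : ℕ) < t) = b1) ∧ (decide ((a : ℕ) % 2 = 0) = b2) then (1:ℝ) else 0) * (if (b1 = decide ((b : ℕ) < t)) ∧ (b2 = decide ((b : ℕ) % 2 = 0)) then (1:ℝ) else 0)) (decide ((c : ℕ) < t)) (decide ((c : ℕ) % 2 = 0)) from rfl,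
    sum_cls t he (fun b1 b2 => (if (decide ((a : ℕ) < t) = b1) ∧ (decide ((a : ℕ) % 2 = 0) = b2) then (1:ℝ) else 0) * (if (b1 = decide ((b : ℕ) < t)) ∧ (b2 = decide ((b : ℕ) % 2 = 0)) then (1:ℝ) else 0))]
  by_cases p1 : (a : ℕ) < t <;> by_cases p2 : (a : ℕ) % 2 = 0 <;>
    by_cases p3 : (b : ℕ) < t <;> by_cases p4 : (b : ℕ) % 2 = 0 <;>
    simp [Jm, Em, Cm, p1, p2, p3, p4] <;> push_cast <;> ring

lemma M_decomp (ε : ℝ) : Matrix.of (gPottsWeightEven t ε)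
    = (1 - Real.exp (-ε * t)) • (1 : Matrix (Fin (2 * t)) (Fin (2 * t)) ℝ)
      + Real.exp (-ε * t) • Jm t
      + (Real.exp (-ε * ((t : ℝ) - 2)) - Real.exp (-ε * t)) • Cm t := by
  ext a b
  simp only [Matrix.of_apply, Matrix.add_apply, Matrix.smul_apply, smul_eq_mul, Jm, Cm,
    gPottsWeightEven]
  by_cases hab : a = b
  · subst hab
    simp [Matrix.one_apply_eq]
  · rw [if_neg hab, Matrix.one_apply_ne hab]
    by_cases h1 : ((a : ℕ) < t ↔ (b : ℕ) < t)
    · have hc : (decide ((a : ℕ) < t) ≠ decide ((b : ℕ) < t)) = False := by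
        simp [decide_eq_decide, h1]
      rw [if_pos h1]
      simp [hc]
    · rw [if_neg h1]
      have hd : decide ((a : ℕ) < t) ≠ decide ((b : ℕ) < t) := by
        simp [decide_eq_decide, h1]
      by_cases h2 : (a : ℕ) % 2 = (b : ℕ) % 2
      · have hz : ((((a : ℕ) : ℤ) - ((b : ℕ) : ℤ)) % 2 : ℤ) = 0 := by omega
        have hp : (decide ((a : ℕ) % 2 = 0) ≠ decide ((b : ℕ) % 2 = 0)) = False := by
          simp [decide_eq_decide]; omega
        rw [hz]
        simp [hp]
      · have hz : ((((a : ℕ) : ℤ) - ((b : ℕ) : ℤ)) % 2 : ℤ) = 1 := by omega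
        have hp : decide ((a : ℕ) % 2 = 0) ≠ decide ((b : ℕ) % 2 = 0) := by
          simp [decide_eq_decide]; omega
        rw [hz, if_pos ⟨hd, hp⟩]
        have : Real.exp (-ε * ((t : ℝ) - 2)) = Real.exp (-ε * t + 2 * ε * ((1 : ℤ) : ℝ)) := by
          congr 1; push_cast; ring
        rw [this]; ring

end GP



namespace GP
variable (t : ℕ) (ε : ℝ) (m : ℕ)

noncomputable def lam1 : ℝ := 1 - Real.exp (-ε * t)
noncomputable def lam2 : ℝ :=
  1 - m * Real.exp (-ε * ((t : ℝ) - 2)) + ((m : ℝ) - 1) * Real.exp (-ε * t)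
noncomputable def lam3 : ℝ :=
  1 + m * Real.exp (-ε * ((t : ℝ) - 2)) - ((m : ℝ) + 1) * Real.exp (-ε * t)
noncomputable def lam4 : ℝ :=
  1 + m * Real.exp (-ε * ((t : ℝ) - 2)) + (3 * (m : ℝ) - 1) * Real.exp (-ε * t)

noncomputable def qc (L : ℕ) : ℝ := (lam4 t ε m ^ L - lam3 t ε m ^ L) / (4 * m)
noncomputable def rc (L : ℕ) : ℝ := (lam3 t ε m ^ L - lam2 t ε m ^ L) / (2 * m)
noncomputable def sc (L : ℕ) : ℝ :=
  ((lam2 t ε m ^ L + lam3 t ε m ^ L) / 2 - lam1 t ε ^ L) / m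

lemma pow_decomp (he : t = m + m) (hm : 0 < m) :
    ∀ L : ℕ, 1 ≤ L → (Matrix.of (gPottsWeightEven t ε)) ^ L
      = (lam1 t ε ^ L) • (1 : Matrix (Fin (2 * t)) (Fin (2 * t)) ℝ)
        + qc t ε m L • Jm t + rc t ε m L • Cm t + sc t ε m L • Em t := by
  have hm' : (m : ℝ) ≠ 0 := Nat.cast_ne_zero.mpr hm.ne'
  intro L hL
  induction L, hL using Nat.le_induction with
  | base =>
    have hq : qc t ε m 1 = Real.exp (-ε * t) := by
      unfold qc lam3 lam4; field_simp; ring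
    have hr : rc t ε m 1 = Real.exp (-ε * ((t : ℝ) - 2)) - Real.exp (-ε * t) := by
      unfold rc lam2 lam3; field_simp; ring
    have hs : sc t ε m 1 = 0 := by
      unfold sc lam1 lam2 lam3; field_simp; ring
    rw [pow_one, pow_one, hq, hr, hs, M_decomp, zero_smul, add_zero]
    unfold lam1
    rfl
  | succ L hL ih =>
    rw [pow_succ', ih, M_decomp]
    have hp : lam1 t ε ^ (L + 1) = (1 - Real.exp (-ε * t)) * lam1 t ε ^ L := by
      rw [pow_succ']; unfold lam1; rfl
    have hee : Real.exp (-ε * ((t:ℝ) - 2)) = Real.exp (-ε * ((t:ℝ) - 2)) := rfl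
    have hq : qc t ε m (L + 1)
        = (1 - Real.exp (-ε * (t:ℝ))) * qc t ε m L + Real.exp (-ε * (t:ℝ)) * lam1 t ε ^ L + 4 * m * (Real.exp (-ε * (t:ℝ)) * qc t ε m L)
          + m * (Real.exp (-ε * (t:ℝ)) * rc t ε m L) + m * (Real.exp (-ε * (t:ℝ)) * sc t ε m L) + m * ((Real.exp (-ε * ((t:ℝ) - 2)) - Real.exp (-ε * (t:ℝ))) * qc t ε m L) := by
      unfold qc rc sc lam1 lam2 lam3 lam4
      field_simp
      ring
    have hr : rc t ε m (L + 1)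
        = (1 - Real.exp (-ε * (t:ℝ))) * rc t ε m L + (Real.exp (-ε * ((t:ℝ) - 2)) - Real.exp (-ε * (t:ℝ))) * lam1 t ε ^ L + m * ((Real.exp (-ε * ((t:ℝ) - 2)) - Real.exp (-ε * (t:ℝ))) * sc t ε m L) := by
      unfold rc sc lam1 lam2 lam3
      field_simp
      ring
    have hs : sc t ε m (L + 1) = (1 - Real.exp (-ε * (t:ℝ))) * sc t ε m L + m * ((Real.exp (-ε * ((t:ℝ) - 2)) - Real.exp (-ε * (t:ℝ))) * rc t ε m L) := by
      unfold sc rc lam1 lam2 lam3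
      field_simp
      ring
    rw [hp, hq, hr, hs]
    simp only [Matrix.add_mul, Matrix.mul_add, smul_mul_assoc, mul_smul_comm,
      Matrix.one_mul, Matrix.mul_one, mul_JJ t he, mul_JC t he, mul_CJ t he, mul_JE t he,
      mul_EJ t he, mul_CC t he, mul_CE t he, mul_EC t he, mul_EE t he, smul_smul]
    module

end GP

namespace GP
variable (t : ℕ)

lemma trace_Jm : (Jm t).trace = 2 * (t : ℝ) := by
  simp [Matrix.trace, Matrix.diag, Jm, Finset.card_univ]

lemma trace_Em : (Em t).trace = 2 * (t : ℝ) := by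
  simp [Matrix.trace, Matrix.diag, Em, Finset.card_univ]

lemma trace_Cm : (Cm t).trace = 0 := by
  simp [Matrix.trace, Matrix.diag, Cm]

end GP

/-- Periodic-boundary generalized Potts partition function for even
`t`:
`Z = (2t−4)(1−e^{−εt})^L + 2(1 − (t/2)e^{−ε(t−2)} + (t/2−1)e^{−εt})^L
  + (1 + (t/2)e^{−ε(t−2)} − (t/2+1)e^{−εt})^L
  + (1 + (t/2)e^{−ε(t−2)} + (3t/2−1)e^{−εt})^L`. -/
theorem gpotts_partition_floquet_trs_pbc_even (t : ℕ) (ht : 2 ≤ t) (heven : Even t)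
    (ε : ℝ) (L : ℕ) [NeZero L] :
    (∑ s : ZMod L → Fin (2 * t), ∏ i : ZMod L, gPottsWeightEven t ε (s i) (s (i + 1)))
      = (2 * (t : ℝ) - 4) * (1 - Real.exp (-ε * t)) ^ L
        + 2 * (1 - ((t : ℝ) / 2) * Real.exp (-ε * ((t : ℝ) - 2))
            + ((t : ℝ) / 2 - 1) * Real.exp (-ε * t)) ^ L
        + (1 + ((t : ℝ) / 2) * Real.exp (-ε * ((t : ℝ) - 2))
            - ((t : ℝ) / 2 + 1) * Real.exp (-ε * t)) ^ L
        + (1 + ((t : ℝ) / 2) * Real.exp (-ε * ((t : ℝ) - 2))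
            + (3 * (t : ℝ) / 2 - 1) * Real.exp (-ε * t)) ^ L := by
  obtain ⟨m, he⟩ := heven
  subst he
  have hm : 0 < m := by omega
  have hm' : (m : ℝ) ≠ 0 := Nat.cast_ne_zero.mpr hm.ne'
  have hL : 1 ≤ L := Nat.one_le_iff_ne_zero.mpr (NeZero.ne L)
  calc (∑ s : ZMod L → Fin (2 * (m + m)),
          ∏ i : ZMod L, gPottsWeightEven (m + m) ε (s i) (s (i + 1)))
      = ((Matrix.of (gPottsWeightEven (m + m) ε)) ^ L).trace := cyc _ L
    _ = _ := by
      rw [GP.pow_decomp (m + m) ε m rfl hm L hL]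
      rw [Matrix.trace_add, Matrix.trace_add, Matrix.trace_add, Matrix.trace_smul,
        Matrix.trace_smul, Matrix.trace_smul, Matrix.trace_smul, Matrix.trace_one,
        GP.trace_Jm, GP.trace_Em, GP.trace_Cm]
      unfold GP.qc GP.rc GP.sc GP.lam1 GP.lam2 GP.lam3 GP.lam4
      push_cast
      have hb : ((m : ℝ) + m) / 2 = m := by ring
      have hb2 : 3 * ((m : ℝ) + m) / 2 = 3 * m := by ring
      rw [hb, hb2]
      simp only [smul_eq_mul, Fintype.card_fin]
      field_simp
      push_cast
      ring
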